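/- arXiv:1304.2472 — 2 statements merged into one kernel-verified Lean document; each statement's English description precedes it below -/
import Mathlib

section
/- Let r ≥ 1 be an integer and let s, w ∈ ℂ with Re(s) > r and Re(w) > 0. Then (1/Γ(w)) · ∫_{1}^{∞} (u−1)^r · u^{−s−1} (log u)^{w−1} du = Σ_{n=0}^{r} (−1)^n · C(r,n) · (s−r+n)^{−w}. -/
open MeasureTheory Complex Set Filter Topology

/-! Expanding `(u - 1) ^ r` binomially reduces the integral to
`∑ (-1) ^ n C(r, n) ∫₁^∞ u ^ (-cₙ - 1) (log u) ^ (w - 1) du` with `cₙ = s - r + n`, `0 < Re cₙ`.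
The substitution `u = eᵗ` turns each term into the Laplace transform
`∫₀^∞ t ^ (w - 1) e^(-c t) dt = Γ(w) c ^ (-w)`, which Mathlib knows for real `c > 0`; both sides
are holomorphic in `c`, so the identity theorem extends it to `0 < Re c`. -/

lemma norm_ofReal_cpow_mul_cexp_neg_mul (v a : ℂ) {t : ℝ} (ht : 0 < t) :
    ‖(t : ℂ) ^ v * cexp (-a * t)‖ = t ^ v.re * Real.exp (-a.re * t) := by
  simp [norm_cpow_eq_rpow_re_of_pos ht, norm_exp, mul_re]

lemma integrableOn_cpow_mul_cexp_neg_mul {v a : ℂ} (hv : -1 < v.re) (ha : 0 < a.re) :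
    IntegrableOn (fun t : ℝ => (t : ℂ) ^ v * cexp (-a * t)) (Ioi 0) := by
  have hbound := integrableOn_rpow_mul_exp_neg_mul_rpow hv one_pos ha
  simp only [Real.rpow_one] at hbound
  refine hbound.mono' ?_ ?_
  · refine ContinuousOn.aestronglyMeasurable (fun t ht => ?_) measurableSet_Ioi
    exact ((continuousAt_ofReal_cpow_const t v (Or.inr (ne_of_gt ht))).mul
      (by fun_prop)).continuousWithinAt
  · filter_upwards [ae_restrict_mem measurableSet_Ioi] with t ht
    rw [norm_ofReal_cpow_mul_cexp_neg_mul v a ht, neg_mul]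

lemma hasDerivAt_cpow_mul_cexp_neg_mul (v a : ℂ) {t : ℝ} (ht : 0 < t) :
    HasDerivAt (fun b : ℂ => (t : ℂ) ^ v * cexp (-b * t))
      (-((t : ℂ) ^ (v + 1) * cexp (-a * t))) a := by
  have hexp : HasDerivAt (fun b : ℂ => cexp (-b * t)) (cexp (-a * t) * -t) a := by
    simpa using ((hasDerivAt_id a).neg.mul_const (t : ℂ)).cexp
  refine (hexp.const_mul ((t : ℂ) ^ v)).congr_deriv ?_
  rw [cpow_add _ _ (ofReal_ne_zero.mpr ht.ne'), cpow_one]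
  ring

lemma hasDerivAt_integral_cpow_mul_cexp_neg_mul {v z : ℂ} (hv : -1 < v.re) (hz : 0 < z.re) :
    HasDerivAt (fun a : ℂ => ∫ t in Ioi (0 : ℝ), (t : ℂ) ^ v * cexp (-a * t))
      (-∫ t in Ioi (0 : ℝ), (t : ℂ) ^ (v + 1) * cexp (-z * t)) z := by
  have hv' : -1 < (v + 1).re := by simp only [add_re, one_re]; linarith
  have hs : {a : ℂ | z.re / 2 < a.re} ∈ 𝓝 z :=
    (isOpen_lt continuous_const continuous_re).mem_nhds (show z.re / 2 < z.re by linarith)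
  obtain ⟨-, hderiv⟩ := hasDerivAt_integral_of_dominated_loc_of_deriv_le
    (F := fun a (t : ℝ) => (t : ℂ) ^ v * cexp (-a * t))
    (F' := fun a (t : ℝ) => -((t : ℂ) ^ (v + 1) * cexp (-a * t)))
    (bound := fun t : ℝ => ‖(t : ℂ) ^ (v + 1) * cexp (-(z / 2) * t)‖) hs
    (eventually_of_mem hs fun a (ha : z.re / 2 < a.re) =>
      (integrableOn_cpow_mul_cexp_neg_mul hv (by linarith)).aestronglyMeasurable)
    (integrableOn_cpow_mul_cexp_neg_mul hv hz)
    (integrableOn_cpow_mul_cexp_neg_mul hv' hz).aestronglyMeasurable.neg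
    (by
      filter_upwards [ae_restrict_mem measurableSet_Ioi]
        with t (ht : 0 < t) a (ha : z.re / 2 < a.re)
      rw [norm_neg, norm_ofReal_cpow_mul_cexp_neg_mul _ _ ht,
        norm_ofReal_cpow_mul_cexp_neg_mul _ _ ht]
      refine mul_le_mul_of_nonneg_left (Real.exp_le_exp.mpr ?_) (by positivity)
      simp only [div_re, neg_mul, neg_le_neg_iff]
      norm_num
      nlinarith)
    (integrableOn_cpow_mul_cexp_neg_mul hv' (by simpa using hz)).norm
    (by
      filter_upwards [ae_restrict_mem measurableSet_Ioi] with t (ht : 0 < t) a _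
      exact hasDerivAt_cpow_mul_cexp_neg_mul v a ht)
  simpa only [integral_neg] using hderiv

lemma eqOn_re_pos_of_eq_ofReal {f g : ℂ → ℂ} (hf : AnalyticOnNhd ℂ f {z | 0 < z.re})
    (hg : AnalyticOnNhd ℂ g {z | 0 < z.re}) (hfg : ∀ x : ℝ, 0 < x → f x = g x) :
    EqOn f g {z | 0 < z.re} := by
  have hreal : Tendsto (fun x : ℝ => (x : ℂ)) (𝓝[>] 1) (𝓝[≠] 1) := by
    have := (continuous_ofReal.continuousWithinAt (x := 1)).tendsto_nhdsWithin
      (s := Ioi (1 : ℝ)) (t := {(1 : ℂ)}ᶜ) fun x (hx : 1 < x) => by simpa using hx.ne'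
    rwa [ofReal_one] at this
  have hfreq : ∃ᶠ z in 𝓝[≠] (1 : ℂ), f z = g z :=
    hreal.frequently (eventually_nhdsWithin_of_forall (s := Ioi 1) fun x hx =>
      hfg x (one_pos.trans hx)).frequently
  exact hf.eqOn_of_preconnected_of_frequently_eq hg (convex_halfSpace_re_gt 0).isPreconnected
    (by simp) hfreq

theorem integral_cpow_mul_cexp_neg_mul_Ioi {w a : ℂ} (hw : 0 < w.re) (ha : 0 < a.re) :
    ∫ t in Ioi (0 : ℝ), (t : ℂ) ^ (w - 1) * cexp (-a * t) = Gamma w * a ^ (-w) := by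
  have hv : -1 < (w - 1).re := by simp only [sub_re, one_re]; linarith
  have hopen : IsOpen {z : ℂ | 0 < z.re} := isOpen_lt continuous_const continuous_re
  refine eqOn_re_pos_of_eq_ofReal
    (f := fun a => ∫ t in Ioi (0 : ℝ), (t : ℂ) ^ (w - 1) * cexp (-a * t))
    (g := fun a => Gamma w * a ^ (-w)) ?_ ?_ (fun x hx => ?_) ha
  · exact DifferentiableOn.analyticOnNhd (fun z hz => (hasDerivAt_integral_cpow_mul_cexp_neg_mul
      hv hz).differentiableAt.differentiableWithinAt) hopen
  · exact DifferentiableOn.analyticOnNhd (fun z (hz : 0 < z.re) =>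
      ((differentiableAt_id.cpow_const (Or.inl hz)).const_mul _).differentiableWithinAt) hopen
  · have harg : arg (x : ℂ) ≠ Real.pi := by
      rw [arg_ofReal_of_nonneg hx.le]; exact Real.pi_ne_zero.symm
    simp only [neg_mul]
    rw [integral_cpow_mul_exp_neg_mul_Ioi hw hx, one_div, inv_cpow _ _ harg, cpow_neg, mul_comm]

lemma ofReal_exp_cpow (t : ℝ) (z : ℂ) : ((Real.exp t : ℝ) : ℂ) ^ z = cexp (t * z) := by
  rw [cpow_def_of_ne_zero (ofReal_ne_zero.mpr (Real.exp_pos t).ne'),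
    ← ofReal_log (Real.exp_pos t).le, Real.log_exp]

lemma exp_smul_cpow_mul_log_cpow (c w : ℂ) (t : ℝ) :
    Real.exp t • (((Real.exp t : ℝ) : ℂ) ^ (-c - 1) * ((Real.log (Real.exp t) : ℝ) : ℂ) ^ (w - 1))
      = (t : ℂ) ^ (w - 1) * cexp (-c * t) := by
  rw [Real.log_exp, ofReal_exp_cpow, real_smul, ofReal_exp, mul_left_comm, ← mul_assoc,
    ← Complex.exp_add, mul_comm]
  ring_nf

lemma sub_one_pow_mul_cpow_eq_sum (r : ℕ) (s : ℂ) {x : ℂ} (hx : x ≠ 0) :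
    (x - 1) ^ r * x ^ (-s - 1) =
      ∑ n ∈ Finset.range (r + 1), (-1) ^ n * (r.choose n : ℂ) * x ^ (-(s - r + n) - 1) := by
  rw [sub_eq_neg_add, add_pow, Finset.sum_mul]
  refine Finset.sum_congr rfl fun n hn => ?_
  have hnr : n ≤ r := Nat.lt_succ_iff.mp (Finset.mem_range.mp hn)
  have hcpow : x ^ (-(s - r + n) - 1) = x ^ ((r - n : ℕ) : ℂ) * x ^ (-s - 1) := by
    rw [← cpow_add _ _ hx, Nat.cast_sub hnr]
    ring_nf
  rw [hcpow, cpow_natCast]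
  ring

lemma integrableOn_Ioi_one_cpow_mul_log_cpow {c w : ℂ} (hc : 0 < c.re) (hw : 0 < w.re) :
    IntegrableOn (fun u : ℝ => (u : ℂ) ^ (-c - 1) * (Real.log u : ℂ) ^ (w - 1)) (Ioi 1) := by
  rw [← Real.exp_zero, ← integrableOn_comp_exp_Ioi]
  simp_rw [exp_smul_cpow_mul_log_cpow]
  exact integrableOn_cpow_mul_cexp_neg_mul (by simp only [sub_re, one_re]; linarith) hc

theorem integral_Ioi_one_cpow_mul_log_cpow {c w : ℂ} (hc : 0 < c.re) (hw : 0 < w.re) :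
    ∫ u in Ioi (1 : ℝ), (u : ℂ) ^ (-c - 1) * (Real.log u : ℂ) ^ (w - 1) = Gamma w * c ^ (-w) := by
  rw [← Real.exp_zero, ← integral_comp_exp_Ioi]
  simp_rw [exp_smul_cpow_mul_log_cpow]
  exact integral_cpow_mul_cexp_neg_mul_Ioi hw hc

theorem absolute_hurwitz_Gm_tensor_general (r : ℕ) (s w : ℂ)
    (hs : (r : ℝ) < s.re) (hw : 0 < w.re) :
    (1 / Complex.Gamma w) *
      ∫ u in Set.Ioi (1 : ℝ),
        ((u : ℂ) - 1) ^ r * (u : ℂ) ^ (-s - 1) * (Real.log u : ℂ) ^ (w - 1) =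
    ∑ n ∈ Finset.range (r + 1),
      (-1 : ℂ) ^ n * (r.choose n : ℂ) * (s - (r : ℂ) + (n : ℂ)) ^ (-w) := by
  have hre (n : ℕ) : 0 < (s - r + n).re := by
    simp only [add_re, sub_re, natCast_re]
    linarith [n.cast_nonneg (α := ℝ)]
  have hexpand : EqOn
      (fun u : ℝ => ((u : ℂ) - 1) ^ r * (u : ℂ) ^ (-s - 1) * (Real.log u : ℂ) ^ (w - 1))
      (fun u : ℝ => ∑ n ∈ Finset.range (r + 1), (-1) ^ n * (r.choose n : ℂ) *
        ((u : ℂ) ^ (-(s - r + n) - 1) * (Real.log u : ℂ) ^ (w - 1))) (Ioi 1) := fun u hu => by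
    dsimp only
    rw [sub_one_pow_mul_cpow_eq_sum r s (ofReal_ne_zero.mpr (one_pos.trans hu).ne'), Finset.sum_mul]
    exact Finset.sum_congr rfl fun n _ => mul_assoc _ _ _
  rw [setIntegral_congr_fun measurableSet_Ioi hexpand, integral_finsetSum _ fun n _ =>
    (integrableOn_Ioi_one_cpow_mul_log_cpow (hre n) hw).const_mul _, Finset.mul_sum]
  refine Finset.sum_congr rfl fun n _ => ?_
  rw [integral_const_mul, integral_Ioi_one_cpow_mul_log_cpow (hre n) hw]
  field_simp [Gamma_ne_zero_of_re_pos hw]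

theorem absolute_hurwitz_Gm_tensor (r : ℕ) (hr : 1 ≤ r) (s w : ℂ)
    (hs : (r : ℝ) < s.re) (hw : 0 < w.re) :
    (1 / Complex.Gamma w) *
      ∫ u in Set.Ioi (1 : ℝ),
        ((u : ℂ) - 1) ^ r * (u : ℂ) ^ (-s - 1) * (Real.log u : ℂ) ^ (w - 1) =
    ∑ n ∈ Finset.range (r + 1),
      (-1 : ℂ) ^ n * (r.choose n : ℂ) * (s - (r : ℂ) + (n : ℂ)) ^ (-w) :=
  absolute_hurwitz_Gm_tensor_general r s w hs hw
end

section
/- Let r ≥ 1 be an integer, let ω : Fin r → ℝ, and let x ∈ ℂ with x + Σ_{i∈S} ω(i) ≠ 0 for every subset S ⊆ Fin r. Then exp of the derivative at w = 0 of the function w ↦ Σ_{S ⊆ Fin r} (−1)^{|S|} (x + Σ_{i∈S} ω(i))^{−w} equals Π_{S ⊆ Fin r} (x + Σ_{i∈S} ω(i))^{(−1)^{|S|+1}}, where each factor is an integer power (zpow) of a nonzero complex number. -/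
open Complex

/-
Differentiating `w ↦ Σ nᵢ aᵢ^(-w)` at `0` gives `-Σ nᵢ log aᵢ`, and the exponential turns this
sum of logarithms with integer coefficients back into the product `Π aᵢ^(-nᵢ)`; the ambiguity of
the complex logarithm disappears because the coefficients are integers.
-/

theorem hasDerivAt_const_cpow_neg_zero {a : ℂ} (ha : a ≠ 0) :
    HasDerivAt (fun w : ℂ => a ^ (-w)) (-log a) 0 := by
  simpa using ((hasDerivAt_id (0 : ℂ)).neg).const_cpow (c := a) (Or.inl ha)

theorem exp_deriv_sum_intCast_mul_cpow_neg {ι : Type*} [Fintype ι] (n : ι → ℤ) {a : ι → ℂ}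
    (ha : ∀ i, a i ≠ 0) :
    exp (deriv (fun w : ℂ => ∑ i, (n i : ℂ) * a i ^ (-w)) 0) = ∏ i, a i ^ (-n i) := by
  have hderiv : HasDerivAt (fun w : ℂ => ∑ i, (n i : ℂ) * a i ^ (-w))
      (∑ i, (n i : ℂ) * -log (a i)) 0 :=
    HasDerivAt.fun_sum fun i _ => (hasDerivAt_const_cpow_neg_zero (ha i)).const_mul _
  rw [hderiv.deriv, exp_sum]
  refine Finset.prod_congr rfl fun i _ => ?_
  rw [mul_neg, ← neg_mul, ← Int.cast_neg, exp_int_mul, exp_log (ha i)]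

theorem multiperiod_gamma_negative_order_general (r : ℕ) (ω : Fin r → ℝ) (x : ℂ)
    (hx : ∀ S : Finset (Fin r), x + ∑ i ∈ S, (ω i : ℂ) ≠ 0) :
    Complex.exp (deriv
        (fun w : ℂ => ∑ S : Finset (Fin r),
          (-1 : ℂ) ^ S.card * (x + ∑ i ∈ S, (ω i : ℂ)) ^ (-w)) 0) =
    ∏ S : Finset (Fin r), (x + ∑ i ∈ S, (ω i : ℂ)) ^ ((-1 : ℤ) ^ (S.card + 1)) := by
  have hsign : ∀ S : Finset (Fin r), (-1 : ℂ) ^ S.card = (((-1 : ℤ) ^ S.card : ℤ) : ℂ) :=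
    fun S => by push_cast; rfl
  simp_rw [hsign, exp_deriv_sum_intCast_mul_cpow_neg _ hx, pow_succ, mul_neg_one]

theorem multiperiod_gamma_negative_order (r : ℕ) (hr : 1 ≤ r) (ω : Fin r → ℝ) (x : ℂ)
    (hx : ∀ S : Finset (Fin r), x + ∑ i ∈ S, (ω i : ℂ) ≠ 0) :
    Complex.exp (deriv
        (fun w : ℂ => ∑ S : Finset (Fin r),
          (-1 : ℂ) ^ S.card * (x + ∑ i ∈ S, (ω i : ℂ)) ^ (-w)) 0) =
    ∏ S : Finset (Fin r), (x + ∑ i ∈ S, (ω i : ℂ)) ^ ((-1 : ℤ) ^ (S.card + 1)) :=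
  multiperiod_gamma_negative_order_general r ω x hx
end
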